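/- arXiv:2009.10063 — 4 statements merged into one kernel-verified Lean document; each statement's English description precedes it below -/
import Mathlib

section
/- Consider the action of S₃ = Equiv.Perm (Fin 3) by simultaneous conjugation on the set of quadruples (τ₁, τ₂, τ₃, τ₄) of transpositions in S₃ satisfying τ₁ * τ₂ * τ₃ * τ₄ = 1 whose entries are not all equal. The number of orbits of this action is exactly 4. -/
/-- The set of quadruples of transpositions of `S₃ = Equiv.Perm (Fin 3)` with product the
identity and entries not all equal. -/
def GoodQuadruple : Type :=
  {q : Equiv.Perm (Fin 3) × Equiv.Perm (Fin 3) × Equiv.Perm (Fin 3) × Equiv.Perm (Fin 3) //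
    q.1.IsSwap ∧ q.2.1.IsSwap ∧ q.2.2.1.IsSwap ∧ q.2.2.2.IsSwap ∧
      q.1 * q.2.1 * q.2.2.1 * q.2.2.2 = 1 ∧
      ¬(q.1 = q.2.1 ∧ q.1 = q.2.2.1 ∧ q.1 = q.2.2.2)}

/-- Two good quadruples are related if one is obtained from the other by simultaneous
conjugation by some `σ ∈ S₃`. -/
def SimConjRel (q q' : GoodQuadruple) : Prop :=
  ∃ σ : Equiv.Perm (Fin 3),
    q'.1 = (σ * q.1.1 * σ⁻¹, σ * q.1.2.1 * σ⁻¹, σ * q.1.2.2.1 * σ⁻¹, σ * q.1.2.2.2 * σ⁻¹)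

instance : DecidablePred (Equiv.Perm.IsSwap (α := Fin 3)) := fun f =>
  decidable_of_iff (∃ x y, x ≠ y ∧ f = Equiv.swap x y) Iff.rfl

instance : Fintype GoodQuadruple := by unfold GoodQuadruple; infer_instance

instance : DecidableEq GoodQuadruple := fun a b =>
  decidable_of_iff (a.1 = b.1) Subtype.ext_iff.symm

instance : DecidableRel SimConjRel := fun q q' => by unfold SimConjRel; infer_instance

/-- `SimConjRel` as a setoid (it is an equivalence relation, being the orbit relation of a
group action). -/
def simConjSetoid : Setoid GoodQuadruple where
  r := SimConjRel
  iseqv := by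
    constructor
    · intro q; exact ⟨1, by simp⟩
    · rintro q q' ⟨σ, h⟩
      refine ⟨σ⁻¹, ?_⟩
      rw [h]
      simp [mul_assoc]
    · rintro q q' q'' ⟨σ, h⟩ ⟨τ, h'⟩
      refine ⟨τ * σ, ?_⟩
      rw [h', h]
      simp [mul_assoc]

instance : Fintype (Quotient simConjSetoid) :=
  @Quotient.fintype _ _ simConjSetoid (fun a b => inferInstanceAs (Decidable (SimConjRel a b)))

set_option maxRecDepth 100000 in
set_option maxHeartbeats 4000000 in
/-- The simultaneous conjugation action of `S₃` on the set of quadruples of transpositions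
with product the identity and entries not all equal has exactly `4` orbits. -/
theorem four_orbits_of_simultaneous_conjugation :
    Nat.card (Quot SimConjRel) = 4 := by
  have : Quot SimConjRel = Quotient simConjSetoid := rfl
  rw [this, Nat.card_eq_fintype_card]
  decide
end

section
/- Write (a b) for the transposition of S₃ = Equiv.Perm (Fin 3) swapping a and b. The four quadruples A = ((1 2),(1 2),(1 3),(1 3)), B = ((1 2),(1 3),(1 3),(1 2)), C = ((1 2),(1 3),(2 3),(1 3)), D = ((1 2),(1 3),(1 2),(2 3)) each consist of transpositions with product equal to the identity and entries not all equal; they lie in pairwise distinct orbits of the simultaneous conjugation action of S₃; and every quadruple of transpositions in S₃ with product the identity and entries not all equal is simultaneously conjugate to exactly one of A, B, C, D. -/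
/-- Quadruples of permutations of `Fin 3`. -/
abbrev Quad :=
  Equiv.Perm (Fin 3) × Equiv.Perm (Fin 3) × Equiv.Perm (Fin 3) × Equiv.Perm (Fin 3)

/-- The set of quadruples of transpositions of `S₃` with product the identity and entries
not all equal. -/
def goodQuads : Set Quad :=
  {q | q.1.IsSwap ∧ q.2.1.IsSwap ∧ q.2.2.1.IsSwap ∧ q.2.2.2.IsSwap ∧
    q.1 * q.2.1 * q.2.2.1 * q.2.2.2 = 1 ∧
    ¬(q.1 = q.2.1 ∧ q.1 = q.2.2.1 ∧ q.1 = q.2.2.2)}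

/-- Simultaneous conjugation: `q` and `q'` lie in the same orbit of the diagonal
conjugation action of `S₃`. -/
def SameOrbit (q q' : Quad) : Prop :=
  ∃ σ : Equiv.Perm (Fin 3),
    q' = (σ * q.1 * σ⁻¹, σ * q.2.1 * σ⁻¹, σ * q.2.2.1 * σ⁻¹, σ * q.2.2.2 * σ⁻¹)

/-- The representative `A = ((1 2), (1 2), (1 3), (1 3))`. -/
def qA : Quad := (Equiv.swap 0 1, Equiv.swap 0 1, Equiv.swap 0 2, Equiv.swap 0 2)

/-- The representative `B = ((1 2), (1 3), (1 3), (1 2))`. -/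
def qB : Quad := (Equiv.swap 0 1, Equiv.swap 0 2, Equiv.swap 0 2, Equiv.swap 0 1)

/-- The representative `C = ((1 2), (1 3), (2 3), (1 3))`. -/
def qC : Quad := (Equiv.swap 0 1, Equiv.swap 0 2, Equiv.swap 1 2, Equiv.swap 0 2)

/-- The representative `D = ((1 2), (1 3), (1 2), (2 3))`. -/
def qD : Quad := (Equiv.swap 0 1, Equiv.swap 0 2, Equiv.swap 0 1, Equiv.swap 1 2)

instance (f : Equiv.Perm (Fin 3)) : Decidable f.IsSwap :=
  inferInstanceAs (Decidable (∃ x y, x ≠ y ∧ f = Equiv.swap x y))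

instance : DecidablePred (· ∈ goodQuads) := fun q =>
  inferInstanceAs (Decidable (q.1.IsSwap ∧ q.2.1.IsSwap ∧ q.2.2.1.IsSwap ∧ q.2.2.2.IsSwap ∧
    q.1 * q.2.1 * q.2.2.1 * q.2.2.2 = 1 ∧
    ¬(q.1 = q.2.1 ∧ q.1 = q.2.2.1 ∧ q.1 = q.2.2.2)))

instance (q q' : Quad) : Decidable (SameOrbit q q') :=
  inferInstanceAs (Decidable (∃ σ : Equiv.Perm (Fin 3),
    q' = (σ * q.1 * σ⁻¹, σ * q.2.1 * σ⁻¹, σ * q.2.2.1 * σ⁻¹, σ * q.2.2.2 * σ⁻¹)))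

set_option maxHeartbeats 4000000 in
theorem key : ∀ a b c d : Equiv.Perm (Fin 3), (a, b, c, d) ∈ goodQuads →
    (SameOrbit qA (a,b,c,d) ∧ ¬SameOrbit qB (a,b,c,d) ∧ ¬SameOrbit qC (a,b,c,d) ∧ ¬SameOrbit qD (a,b,c,d)) ∨
    (¬SameOrbit qA (a,b,c,d) ∧ SameOrbit qB (a,b,c,d) ∧ ¬SameOrbit qC (a,b,c,d) ∧ ¬SameOrbit qD (a,b,c,d)) ∨
    (¬SameOrbit qA (a,b,c,d) ∧ ¬SameOrbit qB (a,b,c,d) ∧ SameOrbit qC (a,b,c,d) ∧ ¬SameOrbit qD (a,b,c,d)) ∨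
    (¬SameOrbit qA (a,b,c,d) ∧ ¬SameOrbit qB (a,b,c,d) ∧ ¬SameOrbit qC (a,b,c,d) ∧ SameOrbit qD (a,b,c,d)) := by
  decide

/-- The four quadruples `A, B, C, D` consist of transpositions with product the identity
and entries not all equal; they lie in pairwise distinct orbits of the simultaneous
conjugation action of `S₃`; and every quadruple of transpositions with product the
identity and entries not all equal is simultaneously conjugate to exactly one of them. -/
theorem orbit_representatives_ABCD :
    (qA ∈ goodQuads ∧ qB ∈ goodQuads ∧ qC ∈ goodQuads ∧ qD ∈ goodQuads) ∧
    (∀ r r' : Quad, r ∈ ({qA, qB, qC, qD} : Set Quad) →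
      r' ∈ ({qA, qB, qC, qD} : Set Quad) → r ≠ r' → ¬ SameOrbit r r') ∧
    (∀ q ∈ goodQuads, ∃! r, r ∈ ({qA, qB, qC, qD} : Set Quad) ∧ SameOrbit r q) := by
  refine ⟨by decide, ?_, ?_⟩
  · intro r r' hr hr'
    simp only [Set.mem_insert_iff, Set.mem_singleton_iff] at hr hr'
    rcases hr with rfl | rfl | rfl | rfl <;> rcases hr' with rfl | rfl | rfl | rfl <;> decide
  · rintro ⟨a, b, c, d⟩ hq
    have h := key a b c d hq
    rcases h with ⟨h1, h2, h3, h4⟩ | ⟨h1, h2, h3, h4⟩ | ⟨h1, h2, h3, h4⟩ | ⟨h1, h2, h3, h4⟩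
    · refine ⟨qA, ⟨by simp, h1⟩, ?_⟩
      rintro y ⟨hy, hyc⟩
      simp only [Set.mem_insert_iff, Set.mem_singleton_iff] at hy
      rcases hy with rfl | rfl | rfl | rfl
      · rfl
      · exact absurd hyc h2
      · exact absurd hyc h3
      · exact absurd hyc h4
    · refine ⟨qB, ⟨by simp, h2⟩, ?_⟩
      rintro y ⟨hy, hyc⟩
      simp only [Set.mem_insert_iff, Set.mem_singleton_iff] at hy
      rcases hy with rfl | rfl | rfl | rfl
      · exact absurd hyc h1
      · rfl
      · exact absurd hyc h3
      · exact absurd hyc h4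
    · refine ⟨qC, ⟨by simp, h3⟩, ?_⟩
      rintro y ⟨hy, hyc⟩
      simp only [Set.mem_insert_iff, Set.mem_singleton_iff] at hy
      rcases hy with rfl | rfl | rfl | rfl
      · exact absurd hyc h1
      · exact absurd hyc h2
      · rfl
      · exact absurd hyc h4
    · refine ⟨qD, ⟨by simp, h4⟩, ?_⟩
      rintro y ⟨hy, hyc⟩
      simp only [Set.mem_insert_iff, Set.mem_singleton_iff] at hy
      rcases hy with rfl | rfl | rfl | rfl
      · exact absurd hyc h1
      · exact absurd hyc h2
      · exact absurd hyc h3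
      · rfl
end

section
/- Let g and d be natural numbers with d ≥ 4 and g + 2 ≤ d. In the polynomial ring ℤ[x, y], the coefficient of the monomial x²y^{d−4} in (1 + 4x + y)^g · (1 + 2x + y)^{d−2−g} equals 2(g² + 2gd + d² − 5d − 7g + 6). -/
open MvPolynomial

/-!
Write `u = 1 + y` and view the polynomial as a polynomial in `x` over `ℤ[y]`: it is
`(4x + u)^g (2x + u)^m` with `m = d - 2 - g`. Its `x²`-coefficient is
`(16 C(g,2) + 8gm + 4 C(m,2)) u^(g+m-2)`, and since `g + m - 2 = d - 4`, the coefficient of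
`y^(d-4)` in `u^(d-4)` is `1`. The closed form follows from `2 C(n,2) = n(n-1)`.
-/

-- Truncated subtraction is harmless: if `g < j` or `m < i` both sides vanish.
theorem Nat.cast_choose_mul_cast_choose_mul_pow_mul_pow {R : Type*} [CommSemiring R]
    (u : R) (g m j i : ℕ) :
    (g.choose j * m.choose i : R) * (u ^ (g - j) * u ^ (m - i)) =
      g.choose j * m.choose i * u ^ (g + m - (j + i)) := by
  by_cases hj : j ≤ g
  · by_cases hi : i ≤ m
    · rw [← pow_add, show g - j + (m - i) = g + m - (j + i) by omega]
    · simp [Nat.choose_eq_zero_of_lt (not_le.mp hi)]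
  · simp [Nat.choose_eq_zero_of_lt (not_le.mp hj)]

namespace Polynomial

variable {R : Type*} [CommSemiring R]

theorem coeff_C_mul_X_add_C_pow (a u : R) (n k : ℕ) :
    ((C a * X + C u) ^ n).coeff k = n.choose k * a ^ k * u ^ (n - k) := by
  have h : (C a * X + C u) ^ n = ((X + C u) ^ n).comp (C a * X) := by simp [add_comm]
  rw [h, comp_C_mul_X_coeff, coeff_X_add_C_pow]
  ring

theorem coeff_mul_two (p q : R[X]) :
    (p * q).coeff 2 = p.coeff 0 * q.coeff 2 + p.coeff 1 * q.coeff 1 + p.coeff 2 * q.coeff 0 := by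
  simp [coeff_mul, Finset.Nat.antidiagonal_succ, add_assoc]

theorem coeff_two_C_mul_X_add_C_pow_mul_C_mul_X_add_C_pow (a b u : R) (g m : ℕ) :
    ((C a * X + C u) ^ g * (C b * X + C u) ^ m).coeff 2 =
      (g.choose 2 * a ^ 2 + g * m * a * b + m.choose 2 * b ^ 2) * u ^ (g + m - 2) := by
  have h02 := Nat.cast_choose_mul_cast_choose_mul_pow_mul_pow u g m 0 2
  have h11 := Nat.cast_choose_mul_cast_choose_mul_pow_mul_pow u g m 1 1
  have h20 := Nat.cast_choose_mul_cast_choose_mul_pow_mul_pow u g m 2 0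
  simp only [Nat.choose_zero_right, Nat.choose_one_right, Nat.cast_one, one_mul, mul_one,
    Nat.sub_zero, zero_add, add_zero, Nat.reduceAdd] at h02 h11 h20
  simp only [coeff_mul_two, coeff_C_mul_X_add_C_pow, Nat.choose_zero_right,
    Nat.choose_one_right, Nat.cast_one, pow_zero, pow_one, Nat.sub_zero, one_mul, mul_one]
  calc _ = b ^ 2 * (m.choose 2 * (u ^ g * u ^ (m - 2))) + a * b * (g * m * (u ^ (g - 1) *
        u ^ (m - 1))) + a ^ 2 * (g.choose 2 * (u ^ (g - 2) * u ^ m)) := by ring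
    _ = _ := by rw [h02, h11, h20]; ring

end Polynomial

theorem MvPolynomial.coeff_single_one_add_X_pow {σ R : Type*} [CommSemiring R] (i : σ)
    (n k : ℕ) : coeff (Finsupp.single i k) ((1 + X i : MvPolynomial σ R) ^ n) = n.choose k := by
  classical
  rw [add_comm, add_pow, coeff_sum]
  simp_rw [one_pow, mul_one, mul_comm _ (n.choose _ : MvPolynomial σ R), ← C_eq_coe_nat,
    coeff_C_mul, coeff_X_pow, (Finsupp.single_injective i).eq_iff, mul_ite, mul_one, mul_zero,
    Finset.sum_ite_eq', Finset.mem_range]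
  split_ifs with h
  · rfl
  · rw [Nat.choose_eq_zero_of_lt (by omega), Nat.cast_zero]

theorem Finsupp.single_zero_add_single_one_eq_cons (a b : ℕ) :
    (Finsupp.single 0 a + Finsupp.single 1 b : Fin 2 →₀ ℕ) =
      Finsupp.cons a (Finsupp.single 0 b) := by
  ext i
  refine Fin.cases ?_ (fun j => ?_) i
  · simp
  · rw [Finsupp.cons_succ, Fin.fin_one_eq_zero j]
    simp

theorem deJonquieres_coefficient_general (g d : ℕ) (hgd : g + 2 ≤ d) :
    MvPolynomial.coeff (Finsupp.single 0 2 + Finsupp.single 1 (d - 4))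
      (((1 + 4 * X 0 + X 1) ^ g * (1 + 2 * X 0 + X 1) ^ (d - 2 - g)) :
        MvPolynomial (Fin 2) ℤ) =
      2 * ((g : ℤ) ^ 2 + 2 * g * d + d ^ 2 - 5 * d - 7 * g + 6) := by
  obtain ⟨m, rfl⟩ : ∃ m, d = g + m + 2 := ⟨d - 2 - g, by omega⟩
  have hX₁ : finSuccEquiv ℤ 1 (X 1) = Polynomial.C (X 0) := by
    rw [← Fin.succ_zero_eq_one, finSuccEquiv_X_succ]
  have hx : finSuccEquiv ℤ 1 ((1 + 4 * X 0 + X 1) ^ g * (1 + 2 * X 0 + X 1) ^ m) =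
      (Polynomial.C 4 * Polynomial.X + Polynomial.C (1 + X 0)) ^ g *
        (Polynomial.C 2 * Polynomial.X + Polynomial.C (1 + X 0)) ^ m := by
    simp only [map_mul, map_pow, map_add, map_one, map_ofNat, hX₁, finSuccEquiv_X_zero]
    ring
  rw [show g + m + 2 - 2 - g = m by omega, show g + m + 2 - 4 = g + m - 2 by omega,
    Finsupp.single_zero_add_single_one_eq_cons, ← finSuccEquiv_coeff_coeff, hx,
    Polynomial.coeff_two_C_mul_X_add_C_pow_mul_C_mul_X_add_C_pow]
  have hC : (g.choose 2 * 4 ^ 2 + g * m * 4 * 2 + m.choose 2 * 2 ^ 2 : MvPolynomial (Fin 1) ℤ) =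
      C ((g.choose 2 * 4 ^ 2 + g * m * 4 * 2 + m.choose 2 * 2 ^ 2 : ℕ) : ℤ) := by
    simp only [Nat.cast_add, Nat.cast_mul, Nat.cast_pow, Nat.cast_ofNat, map_add, map_mul,
      map_pow, map_natCast, map_ofNat]
  rw [hC, coeff_C_mul, coeff_single_one_add_X_pow, Nat.choose_self, Nat.cast_one, mul_one]
  qify
  rw [Nat.cast_choose_two, Nat.cast_choose_two]
  ring

/-- de Jonquières' formula evaluation: for `d ≥ 4` and `g + 2 ≤ d`, the coefficient of
`x² y^(d-4)` in `(1 + 4x + y)^g * (1 + 2x + y)^(d-2-g)` in `ℤ[x, y]` equals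
`2(g² + 2gd + d² − 5d − 7g + 6)`. -/
theorem deJonquieres_coefficient (g d : ℕ) (hd : 4 ≤ d) (hgd : g + 2 ≤ d) :
    MvPolynomial.coeff (Finsupp.single 0 2 + Finsupp.single 1 (d - 4))
      (((1 + 4 * X 0 + X 1) ^ g * (1 + 2 * X 0 + X 1) ^ (d - 2 - g)) :
        MvPolynomial (Fin 2) ℤ) =
      2 * ((g : ℤ) ^ 2 + 2 * g * d + d ^ 2 - 5 * d - 7 * g + 6) :=
  deJonquieres_coefficient_general g d hgd
end

section
/- Let g and d be natural numbers with g ≥ 3 and d > g, and set b = 2g + 2d − 2. Suppose rational numbers c₁, c₂, …, c₁₀ satisfy the ten linear equations: (1) 2c₁ + (b−2)c₂ = 0; (2) 2c₃ + (b−2)c₄ = 0; (3) 2c₅ + (b−2)c₆ = 0; (4) c₇ + (b−2)c₈ = 0; (5) 3c₉ + (b−3)c₁₀ = 0; (6) 2c₃ + (4d−14)c₄ + (8g−8)c₈ + 2c₁₀ = 0; (7) (4d−12)c₄ − 2c₇ + (8g−6)c₈ + c₉ + c₁₀ = 0; (8) 2c₃ + (4d−10)c₄ + (8g−16)c₈ +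 2c₁₀ = 0; (9) 9c₂ + 3c₈ − 4c₁₀ = 0; (10) 3(2g+d−2)c₂ + 2(g² + 2gd + d² − 5d − 7g + 6)c₄ + c₅ + (d−2)c₆ = 0. Then c₁ = c₂ = ⋯ = c₁₀ = 0. -/
/-- For `g ≥ 3` and `d > g`, with `b = 2g + 2d − 2`, the only rational solution of the
ten linear equations coming from pushing forward a boundary relation and intersecting with
the test curves `A₀, B₀, A₁, G_{[3]}, F` is the trivial one. -/
theorem boundary_coefficients_vanish (g d : ℕ) (hg : 3 ≤ g) (hd : g < d)
    (b : ℚ) (hb : b = 2 * g + 2 * d - 2)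
    (c₁ c₂ c₃ c₄ c₅ c₆ c₇ c₈ c₉ c₁₀ : ℚ)
    (h1 : 2 * c₁ + (b - 2) * c₂ = 0)
    (h2 : 2 * c₃ + (b - 2) * c₄ = 0)
    (h3 : 2 * c₅ + (b - 2) * c₆ = 0)
    (h4 : c₇ + (b - 2) * c₈ = 0)
    (h5 : 3 * c₉ + (b - 3) * c₁₀ = 0)
    (h6 : 2 * c₃ + (4 * d - 14) * c₄ + (8 * g - 8) * c₈ + 2 * c₁₀ = 0)
    (h7 : (4 * d - 12) * c₄ - 2 * c₇ + (8 * g - 6) * c₈ + c₉ + c₁₀ = 0)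
    (h8 : 2 * c₃ + (4 * d - 10) * c₄ + (8 * g - 16) * c₈ + 2 * c₁₀ = 0)
    (h9 : 9 * c₂ + 3 * c₈ - 4 * c₁₀ = 0)
    (h10 : 3 * (2 * g + d - 2) * c₂ +
      2 * ((g : ℚ) ^ 2 + 2 * g * d + d ^ 2 - 5 * d - 7 * g + 6) * c₄ +
      c₅ + (d - 2) * c₆ = 0) :
    c₁ = 0 ∧ c₂ = 0 ∧ c₃ = 0 ∧ c₄ = 0 ∧ c₅ = 0 ∧
    c₆ = 0 ∧ c₇ = 0 ∧ c₈ = 0 ∧ c₉ = 0 ∧ c₁₀ = 0 := by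
  subst hb
  have hgq : (3 : ℚ) ≤ (g : ℚ) := by exact_mod_cast hg
  have hdq : (4 : ℚ) ≤ (d : ℚ) := by exact_mod_cast Nat.lt_of_le_of_lt hg hd
  -- c₄ = 2 c₈
  have e1 : c₄ = 2 * c₈ := by linarith [h6, h8]
  -- c₇
  have e2 : c₇ = -(2 * (g : ℚ) + 2 * d - 4) * c₈ := by linear_combination h4
  -- c₁₀
  have e3 : c₁₀ = -(2 * (g : ℚ) + 2 * d - 14) * c₈ := by
    linear_combination (h6 - h2) / 2 - ((d : ℚ) - g - 5) * e1
  -- c₉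
  have e4 : 3 * c₉ = (2 * (g : ℚ) + 2 * d - 5) * (2 * g + 2 * d - 14) * c₈ := by
    linear_combination h5 - (2 * (g : ℚ) + 2 * d - 5) * e3
  -- key equation
  have key : (4 * ((g : ℚ) + d) ^ 2 - 8 * ((g : ℚ) + d) - 2) * c₈ = 0 := by
    linear_combination 3 * h7 - 3 * (4 * (d : ℚ) - 12) * e1 + 6 * e2 - e4 - 3 * e3
  have hpos : (4 * ((g : ℚ) + d) ^ 2 - 8 * ((g : ℚ) + d) - 2) > 0 := by nlinarith
  have hc8 : c₈ = 0 := by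
    rcases mul_eq_zero.mp key with h | h
    · linarith
    · exact h
  have hc4 : c₄ = 0 := by rw [e1, hc8]; ring
  have hc7 : c₇ = 0 := by rw [e2, hc8]; ring
  have hc10 : c₁₀ = 0 := by rw [e3, hc8]; ring
  have hc9 : c₉ = 0 := by linarith [e4, hc8]
  have hc2 : c₂ = 0 := by rw [hc8, hc10] at h9; linarith
  have hc1 : c₁ = 0 := by linear_combination h1 / 2 - ((g : ℚ) + d - 2) * hc2
  have hc3 : c₃ = 0 := by linear_combination h2 / 2 - ((g : ℚ) + d - 2) * hc4
  have hc6 : c₆ = 0 := by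
    have hg6 : 2 * (g : ℚ) * c₆ = 0 := by
      linear_combination h3 - 2 * h10 + 2 * (3 * (2 * (g : ℚ) + d - 2)) * hc2 +
        4 * ((g : ℚ) ^ 2 + 2 * g * d + d ^ 2 - 5 * d - 7 * g + 6) * hc4
    have : (2 * (g : ℚ)) ≠ 0 := by positivity
    exact (mul_eq_zero.mp hg6).resolve_left this
  have hc5 : c₅ = 0 := by
    rw [hc2, hc4, hc6] at h10; linarith
  exact ⟨hc1, hc2, hc3, hc4, hc5, hc6, hc7, hc8, hc9, hc10⟩
end
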